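/- arXiv:2205.11677 — 2 statements merged into one kernel-verified Lean document; each statement's English description precedes it below -/
import Mathlib

section
/- Let X ~ Binomial(n, a/n) and Y ~ Binomial(n, b/n) be independent with a > b > 0. Then for all sufficiently large n, P(X > Y) - P(X < Y) ≥ (a-b)/(2·exp(a+b)). -/
open Finset

/-- The probability mass function of a `Binomial(n, p)` distribution at `k`. -/
noncomputable def binomPMF (n : ℕ) (p : ℝ) (k : ℕ) : ℝ :=
  (n.choose k : ℝ) * p ^ k * (1 - p) ^ (n - k)

private lemma alg_le (A B : ℝ) (hB : 0 ≤ B) (hBA : B ≤ A) (hA : A ≤ 1)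
    (c1 c2 : ℝ) (hc1 : 0 ≤ c1) (hc2 : 0 ≤ c2) (y m d : ℕ) :
    c2 * A ^ y * (1 - A) ^ (m + d) * (c1 * B ^ (y + d) * (1 - B) ^ m) ≤
    c1 * A ^ (y + d) * (1 - A) ^ m * (c2 * B ^ y * (1 - B) ^ (m + d)) := by
  have hA0 : 0 ≤ A := hB.trans hBA
  have h1A : 0 ≤ 1 - A := by linarith
  have h1B : 0 ≤ 1 - B := by linarith
  have key : ((1 - A) * B) ^ d ≤ (A * (1 - B)) ^ d := by
    apply pow_le_pow_left₀ (by positivity)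
    nlinarith
  have hK : 0 ≤ c1 * c2 * A ^ y * B ^ y * (1 - A) ^ m * (1 - B) ^ m := by positivity
  calc c2 * A ^ y * (1 - A) ^ (m + d) * (c1 * B ^ (y + d) * (1 - B) ^ m)
      = (c1 * c2 * A ^ y * B ^ y * (1 - A) ^ m * (1 - B) ^ m) * ((1 - A) * B) ^ d := by
        rw [pow_add, pow_add, mul_pow]; ring
    _ ≤ (c1 * c2 * A ^ y * B ^ y * (1 - A) ^ m * (1 - B) ^ m) * (A * (1 - B)) ^ d :=
        mul_le_mul_of_nonneg_left key hK
    _ = c1 * A ^ (y + d) * (1 - A) ^ m * (c2 * B ^ y * (1 - B) ^ (m + d)) := by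
        rw [pow_add, pow_add, mul_pow]; ring

private lemma swap_le (a b : ℝ) (hb : 0 < b) (hab : b < a) (n x y : ℕ)
    (han : a < n) (hxn : x ≤ n) (hyx : y < x) :
    binomPMF n (a / n) y * binomPMF n (b / n) x ≤
    binomPMF n (a / n) x * binomPMF n (b / n) y := by
  have hn0 : (0:ℝ) < n := lt_trans (hb.trans hab) han
  obtain ⟨d, rfl⟩ : ∃ d, x = y + d := ⟨x - y, by omega⟩
  have e1 : n - (y + d) = n - (y + d) := rfl
  obtain ⟨m, hm⟩ : ∃ m, n - (y + d) = m := ⟨_, rfl⟩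
  have e2 : n - y = m + d := by omega
  simp only [binomPMF, hm, e2]
  exact alg_le (a / n) (b / n) (by positivity) (by gcongr)
    (by rw [div_le_one hn0]; exact han.le) _ _ (by positivity) (by positivity) y m d

/-- For independent `X ~ Binomial(n, a/n)` and `Y ~ Binomial(n, b/n)` with `a > b > 0`,
for all sufficiently large `n`,
`P(X > Y) - P(X < Y) ≥ (a - b) / (2 exp(a + b))`. -/
theorem binomial_comparison_gap (a b : ℝ) (hb : 0 < b) (hab : b < a) :
    ∃ N : ℕ, ∀ n : ℕ, N ≤ n →
      (a - b) / (2 * Real.exp (a + b)) ≤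
        (∑ x ∈ range (n + 1), ∑ y ∈ range (n + 1),
            if y < x then binomPMF n (a / n) x * binomPMF n (b / n) y else 0) -
        (∑ x ∈ range (n + 1), ∑ y ∈ range (n + 1),
            if x < y then binomPMF n (a / n) x * binomPMF n (b / n) y else 0) := by
  have ha : 0 < a := hb.trans hab
  -- limit fact
  have h1 : Filter.Tendsto (fun n : ℕ => (1 - a / n) ^ n * (1 - b / n) ^ n)
      Filter.atTop (nhds (Real.exp (-a) * Real.exp (-b))) := by
    have := (Real.tendsto_one_add_div_pow_exp (-a)).mul (Real.tendsto_one_add_div_pow_exp (-b))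
    simpa [sub_eq_add_neg, neg_div] using this
  have h2 : 1 / (2 * Real.exp (a + b)) < Real.exp (-a) * Real.exp (-b) := by
    rw [← Real.exp_add, ← neg_add, Real.exp_neg]
    rw [one_div, inv_lt_inv₀ (by positivity) (Real.exp_pos _)]
    nlinarith [Real.exp_pos (a + b)]
  have h3 : ∀ᶠ n : ℕ in Filter.atTop,
      1 / (2 * Real.exp (a + b)) < (1 - a / n) ^ n * (1 - b / n) ^ n :=
    h1.eventually (eventually_gt_nhds h2)
  have h4 : ∀ᶠ n : ℕ in Filter.atTop, a < n :=
    tendsto_natCast_atTop_atTop.eventually (Filter.eventually_gt_atTop a)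
  obtain ⟨N, hN⟩ := Filter.eventually_atTop.mp (h3.and h4)
  refine ⟨N, fun n hn => ?_⟩
  obtain ⟨hlim, han⟩ := hN n hn
  have hn0 : (0:ℝ) < n := lt_trans ha han
  have hn1 : 1 ≤ n := by exact_mod_cast Nat.one_le_iff_ne_zero.mpr (by
    rintro rfl; simp at hn0)
  set P : ℕ → ℝ := fun k => binomPMF n (a / n) k with hP
  set Q : ℕ → ℝ := fun k => binomPMF n (b / n) k with hQ
  have hA1 : a / n < 1 := (div_lt_one hn0).mpr han
  have hB1 : b / n < 1 := (div_lt_one hn0).mpr (lt_trans hab han)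
  have hA0 : 0 < a / n := by positivity
  have hB0 : 0 < b / n := by positivity
  -- rewrite the difference as one double sum of nonneg terms
  have hcomm : (∑ x ∈ range (n + 1), ∑ y ∈ range (n + 1),
        if x < y then P x * Q y else 0)
      = ∑ x ∈ range (n + 1), ∑ y ∈ range (n + 1), if y < x then P y * Q x else 0 :=
    Finset.sum_comm
  have hdiff : (∑ x ∈ range (n + 1), ∑ y ∈ range (n + 1),
        if y < x then P x * Q y else 0) -
      (∑ x ∈ range (n + 1), ∑ y ∈ range (n + 1),
        if x < y then P x * Q y else 0)
      = ∑ x ∈ range (n + 1), ∑ y ∈ range (n + 1),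
        if y < x then P x * Q y - P y * Q x else 0 := by
    rw [hcomm, ← Finset.sum_sub_distrib]
    refine Finset.sum_congr rfl fun x _ => ?_
    rw [← Finset.sum_sub_distrib]
    refine Finset.sum_congr rfl fun y _ => ?_
    split <;> simp
  rw [hdiff]
  have hterm : ∀ x ∈ range (n + 1), ∀ y ∈ range (n + 1),
      0 ≤ if y < x then P x * Q y - P y * Q x else 0 := by
    intro x hx y _
    split
    · have := swap_le a b hb hab n x y han (by simpa using Nat.lt_succ_iff.mp (mem_range.mp hx)) ‹y < x›
      linarith
    · exact le_rfl
  -- extract the (x,y) = (1,0) term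
  have hnn : n ≠ 0 := by rintro rfl; norm_num at hn0
  have h1mem : 1 ∈ range (n + 1) := mem_range.mpr (by omega)
  have h0mem : 0 ∈ range (n + 1) := mem_range.mpr (by omega)
  have inner_nonneg : ∀ x ∈ range (n + 1),
      0 ≤ ∑ y ∈ range (n + 1), if y < x then P x * Q y - P y * Q x else 0 :=
    fun x hx => Finset.sum_nonneg fun y hy => hterm x hx y hy
  have step1 : (∑ y ∈ range (n + 1), if y < 1 then P 1 * Q y - P y * Q 1 else 0) ≤
      ∑ x ∈ range (n + 1), ∑ y ∈ range (n + 1),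
        if y < x then P x * Q y - P y * Q x else 0 :=
    Finset.single_le_sum inner_nonneg h1mem
  have step2 : (if (0:ℕ) < 1 then P 1 * Q 0 - P 0 * Q 1 else 0) ≤
      ∑ y ∈ range (n + 1), if y < 1 then P 1 * Q y - P y * Q 1 else 0 :=
    Finset.single_le_sum (fun y hy => hterm 1 h1mem y hy) h0mem
  rw [if_pos (by omega : (0:ℕ) < 1)] at step2
  -- compute the (1,0) term
  have hnne : (n:ℝ) ≠ 0 := ne_of_gt hn0
  have pa : (1 - a / (n:ℝ)) ^ n = (1 - a / n) ^ (n - 1) * (1 - a / n) := by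
    rw [← pow_succ]; congr 1; omega
  have pb : (1 - b / (n:ℝ)) ^ n = (1 - b / n) ^ (n - 1) * (1 - b / n) := by
    rw [← pow_succ]; congr 1; omega
  have hval : P 1 * Q 0 - P 0 * Q 1
      = (a - b) * ((1 - a / n) ^ (n - 1) * (1 - b / n) ^ (n - 1)) := by
    simp only [hP, hQ, binomPMF, Nat.choose_one_right, Nat.choose_zero_right, pow_one,
      pow_zero, Nat.sub_zero, Nat.cast_one, one_mul, mul_one]
    rw [pa, pb]
    field_simp
    ring
  have ua : (1 - a / (n:ℝ)) ^ n ≤ (1 - a / n) ^ (n - 1) :=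
    pow_le_pow_of_le_one (by linarith) (by linarith) (by omega)
  have ub : (1 - b / (n:ℝ)) ^ n ≤ (1 - b / n) ^ (n - 1) :=
    pow_le_pow_of_le_one (by linarith) (by linarith) (by omega)
  have hab' : (0:ℝ) ≤ a - b := by linarith
  calc (a - b) / (2 * Real.exp (a + b))
      = (a - b) * (1 / (2 * Real.exp (a + b))) := by ring
    _ ≤ (a - b) * ((1 - a / n) ^ n * (1 - b / n) ^ n) :=
        mul_le_mul_of_nonneg_left hlim.le hab'
    _ ≤ (a - b) * ((1 - a / n) ^ (n - 1) * (1 - b / n) ^ (n - 1)) := by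
        apply mul_le_mul_of_nonneg_left _ hab'
        apply mul_le_mul ua ub (pow_nonneg (by linarith) _) (pow_nonneg (by linarith) _)
    _ = P 1 * Q 0 - P 0 * Q 1 := hval.symm
    _ ≤ _ := le_trans step2 step1
end

section
/- Let A be the adjacency matrix of an Erdős–Rényi random graph G(n, d/n). Then with probability at least 1 - 5^{-n+2}, the cut norm satisfies ‖A - E[A]‖_{∞→1} ≤ 6(1+d)n. -/
open Finset MeasureTheory ProbabilityTheory


lemma cut_sum_rewrite {n : ℕ} (M : Matrix (Fin n) (Fin n) ℝ) (hsym : ∀ i j, M i j = M j i)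
    (hdiag : ∀ i, M i i = 0) (p : ℝ) (s t : Fin n → ℝ) :
    ∑ i, ∑ j, (M i j - (if i = j then 0 else p)) * s i * t j =
      ∑ q : {q : Fin n × Fin n // q.1 < q.2},
        (M q.1.1 q.1.2 - p) * (s q.1.1 * t q.1.2 + s q.1.2 * t q.1.1) := by
  classical
  set f : Fin n × Fin n → ℝ :=
    fun x => (M x.1 x.2 - if x.1 = x.2 then 0 else p) * s x.1 * t x.2 with hf
  have h0 : ∑ i, ∑ j, (M i j - (if i = j then 0 else p)) * s i * t j = ∑ x : Fin n × Fin n, f x := by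
    rw [← Finset.sum_product', Finset.univ_product_univ]
  rw [h0, ← Finset.sum_filter_add_sum_filter_not Finset.univ (fun x : Fin n × Fin n => x.1 < x.2)]
  have hsub : (Finset.univ.filter fun x : Fin n × Fin n => x.2 < x.1) ⊆
      Finset.univ.filter (fun x : Fin n × Fin n => ¬ x.1 < x.2) := by
    intro x hx
    simp only [Finset.mem_filter, Finset.mem_univ, true_and] at *
    exact asymm hx
  have h2 : ∑ x ∈ Finset.univ.filter (fun x : Fin n × Fin n => ¬ x.1 < x.2), f x
      = ∑ x ∈ Finset.univ.filter (fun x : Fin n × Fin n => x.2 < x.1), f x := by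
    refine (Finset.sum_subset hsub fun x hxb hx => ?_).symm
    simp only [Finset.mem_filter, Finset.mem_univ, true_and, not_lt] at hxb hx
    have heq : x.1 = x.2 := le_antisymm hx hxb
    simp [hf, heq, hdiag x.2]
  have h3 : ∑ x ∈ Finset.univ.filter (fun x : Fin n × Fin n => x.2 < x.1), f x
      = ∑ x ∈ Finset.univ.filter (fun x : Fin n × Fin n => x.1 < x.2), f x.swap := by
    refine Finset.sum_nbij' (fun x => Prod.swap x) (fun x => Prod.swap x) ?_ ?_ ?_ ?_ ?_ <;>
      simp [Prod.swap]
  rw [h2, h3, ← Finset.sum_add_distrib]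
  rw [Finset.sum_subtype (p := fun x : Fin n × Fin n => x.1 < x.2)
    (Finset.univ.filter (fun x : Fin n × Fin n => x.1 < x.2))
    (by intro x; simp) (fun x => f x + f x.swap)]
  apply Finset.sum_congr rfl
  intro q _
  have hne : q.1.1 ≠ q.1.2 := ne_of_lt q.2
  have hne' : q.1.2 ≠ q.1.1 := hne.symm
  simp only [hf, Prod.swap, if_neg hne, if_neg hne']
  rw [hsym q.1.2 q.1.1]
  ring

lemma exp_two_facts : 4 + Real.exp (-2) ≤ Real.exp 2 ∧ Real.exp 2 ≤ 9 := by
  have he : Real.exp 2 = Real.exp 1 * Real.exp 1 := by rw [← Real.exp_add]; norm_num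
  have hen : Real.exp (-2) * Real.exp 2 = 1 := by rw [← Real.exp_add]; norm_num
  have h1 := Real.exp_one_gt_d9
  have h2 := Real.exp_one_lt_d9
  have e2 : (7.38 : ℝ) < Real.exp 2 := by nlinarith
  have em : Real.exp (-2) < 1 := by nlinarith [Real.exp_pos (-2)]
  constructor <;> nlinarith [Real.exp_pos (-2)]

lemma bern_mgf {Ω : Type*} [MeasurableSpace Ω] (P : Measure Ω) [IsProbabilityMeasure P]
    (X : Ω → ℝ) (hX : Measurable X) (hv : ∀ ω, X ω = 0 ∨ X ω = 1)
    (p c : ℝ) (hp : 0 ≤ p) (hP : P {ω | X ω = 1} = ENNReal.ofReal p)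
    (hc : c = 2 ∨ c = -2 ∨ c = 0) :
    mgf (fun ω => (X ω - p) * c) P 1 ≤ Real.exp (p * (Real.exp 2 - 3)) := by
  classical
  have hms : MeasurableSet {ω | X ω = 1} := hX (measurableSet_singleton 1)
  have key : (fun ω => Real.exp (1 * ((X ω - p) * c))) =
      fun ω => Real.exp (-(p * c)) +
        Set.indicator {ω | X ω = 1}
          (fun _ => Real.exp ((1 - p) * c) - Real.exp (-(p * c))) ω := by
    funext ω
    rcases hv ω with h | h
    · rw [Set.indicator_of_notMem (by simp [Set.mem_setOf_eq, h] : ω ∉ {ω | X ω = 1}),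
        add_zero, h]
      congr 1; ring
    · rw [Set.indicator_of_mem (by simp [Set.mem_setOf_eq, h] : ω ∈ {ω | X ω = 1}), h, one_mul]
      ring
  have hint1 : Integrable (Set.indicator {ω | X ω = 1}
      (fun _ => Real.exp ((1 - p) * c) - Real.exp (-(p * c)))) P :=
    (integrable_const _).indicator hms
  rw [mgf]
  rw [show (fun ω => Real.exp (1 * ((X ω - p) * c))) = _ from key]
  rw [integral_add (integrable_const _) hint1, integral_const, measureReal_def, measure_univ,
    integral_indicator_const _ hms, measureReal_def, hP, ENNReal.toReal_ofReal hp]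
  simp only [ENNReal.toReal_one, smul_eq_mul, one_smul, one_mul]
  have h1 : Real.exp ((1 - p) * c) = Real.exp c * Real.exp (-(p * c)) := by
    rw [← Real.exp_add]; congr 1; ring
  rw [h1]
  have h2 : Real.exp c - 1 - c ≤ Real.exp 2 - 3 := by
    obtain ⟨ha, hb⟩ := exp_two_facts
    rcases hc with h | h | h <;> subst h <;> nlinarith [Real.exp_pos (2:ℝ), Real.exp_pos (-2:ℝ), Real.exp_zero]
  have h3 : Real.exp (-(p*c)) + p * (Real.exp c * Real.exp (-(p * c)) - Real.exp (-(p * c)))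
      = Real.exp (-(p*c)) * (1 + p * (Real.exp c - 1)) := by ring
  rw [h3]
  have h4 : 1 + p * (Real.exp c - 1) ≤ Real.exp (p * (Real.exp c - 1)) := by
    have := Real.add_one_le_exp (p * (Real.exp c - 1)); linarith
  calc Real.exp (-(p*c)) * (1 + p * (Real.exp c - 1))
      ≤ Real.exp (-(p*c)) * Real.exp (p * (Real.exp c - 1)) := by
        apply mul_le_mul_of_nonneg_left h4 (Real.exp_pos _).le
    _ = Real.exp (p * (Real.exp c - 1 - c)) := by rw [← Real.exp_add]; congr 1; ring
    _ ≤ Real.exp (p * (Real.exp 2 - 3)) := by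
        apply Real.exp_le_exp.mpr
        exact mul_le_mul_of_nonneg_left h2 hp

lemma num_bound (n : ℕ) :
    ((2^n * 2^n : ℕ) : ℝ) * Real.exp (-(6*n)) ≤ (5:ℝ) ^ ((2:ℤ) - n) := by
  have h20 : (20:ℝ) ≤ Real.exp 6 := by
    have h3 : Real.exp 6 = Real.exp 2 * Real.exp 2 * Real.exp 2 := by
      rw [← Real.exp_add, ← Real.exp_add]; norm_num
    nlinarith [exp_two_facts.1, Real.exp_pos (-2), Real.exp_pos 2]
  have hexp : Real.exp (-(6*(n:ℝ))) = ((Real.exp 6)⁻¹) ^ n := by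
    rw [← Real.exp_neg, ← Real.exp_nat_mul]; congr 1; ring
  have hcast : ((2^n * 2^n : ℕ) : ℝ) = 4 ^ n := by push_cast; rw [← mul_pow]; norm_num
  rw [hcast, hexp, ← mul_pow]
  have hbase : (4:ℝ) * (Real.exp 6)⁻¹ ≤ 1/5 := by
    rw [inv_eq_one_div, mul_one_div, div_le_div_iff₀ (Real.exp_pos 6) (by norm_num)]
    linarith
  calc ((4:ℝ) * (Real.exp 6)⁻¹) ^ n ≤ (1/5:ℝ)^n := by
        apply pow_le_pow_left₀ (by positivity) hbase
    _ ≤ (5:ℝ) ^ ((2:ℤ) - n) := by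
        rw [zpow_sub₀ (by norm_num : (5:ℝ) ≠ 0), zpow_natCast]
        have h5 : (0:ℝ) < 5 ^ n := by positivity
        rw [one_div, inv_pow, div_eq_mul_inv]
        have : ((5:ℝ)^n)⁻¹ ≤ ((5:ℝ)^(2:ℤ)) * ((5:ℝ)^n)⁻¹ := by
          apply le_mul_of_one_le_left (by positivity); norm_num
        exact this


/-- For the adjacency matrix `A` of an Erdős–Rényi random graph `G(n, d/n)`
(symmetric, zero diagonal, edges for `i < j` independent Bernoulli(`d/n`)),
with probability at least `1 - 5^(-n+2)` the cut norm satisfies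
`‖A - E A‖_{∞→1} ≤ 6(1+d)n`, i.e. every pair of sign vectors `s, t` gives
`Σ_{i,j} (A - E A)_ij s_i t_j ≤ 6(1+d)n`. -/
theorem er_cut_norm_bound {n : ℕ} (d : ℝ) (hd : 0 < d) (hdn : d / n ≤ 1)
    {Ω : Type*} [MeasurableSpace Ω] (P : Measure Ω) [IsProbabilityMeasure P]
    (A : Ω → Matrix (Fin n) (Fin n) ℝ)
    (hmeas : ∀ i j, Measurable (fun ω => A ω i j))
    (hsym : ∀ ω i j, A ω i j = A ω j i)
    (hdiag : ∀ ω i, A ω i i = 0)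
    (hval : ∀ ω i j, A ω i j = 0 ∨ A ω i j = 1)
    (hber : ∀ i j : Fin n, i < j → P {ω | A ω i j = 1} = ENNReal.ofReal (d / n))
    (hindep : iIndepFun
      (fun p : {p : Fin n × Fin n // p.1 < p.2} => fun ω => A ω p.1.1 p.1.2) P) :
    ENNReal.ofReal (1 - (5 : ℝ) ^ ((2 : ℤ) - n)) ≤
      P {ω | ∀ s t : Fin n → ℝ, (∀ i, s i = 1 ∨ s i = -1) → (∀ j, t j = 1 ∨ t j = -1) →
        ∑ i, ∑ j, (A ω i j - (if i = j then 0 else d / n)) * s i * t j ≤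
          6 * (1 + d) * n} := by
  classical
  have hp0 : 0 ≤ d / n := div_nonneg hd.le (Nat.cast_nonneg n)
  -- per sign-pair Chernoff bound
  have key : ∀ s t : Fin n → ℝ, (∀ i, s i = 1 ∨ s i = -1) → (∀ j, t j = 1 ∨ t j = -1) →
      P {ω | 6 * (1 + d) * n ≤ ∑ q : {q : Fin n × Fin n // q.1 < q.2},
          (A ω q.1.1 q.1.2 - d / n) * (s q.1.1 * t q.1.2 + s q.1.2 * t q.1.1)}
        ≤ ENNReal.ofReal (Real.exp (-(6 * n))) := by
    intro s t hs ht
    set c : {q : Fin n × Fin n // q.1 < q.2} → ℝ :=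
      fun q => s q.1.1 * t q.1.2 + s q.1.2 * t q.1.1 with hc_def
    have hc : ∀ q, c q = 2 ∨ c q = -2 ∨ c q = 0 := by
      intro q
      rcases hs q.1.1 with h1 | h1 <;> rcases ht q.1.2 with h2 | h2 <;>
        rcases hs q.1.2 with h3 | h3 <;> rcases ht q.1.1 with h4 | h4 <;>
        simp only [hc_def] <;> rw [h1, h2, h3, h4] <;> norm_num
    set Y : {q : Fin n × Fin n // q.1 < q.2} → Ω → ℝ :=
      fun q ω => (A ω q.1.1 q.1.2 - d / n) * c q with hY_def
    have hYmeas : ∀ q, Measurable (Y q) := fun q =>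
      ((hmeas _ _).sub measurable_const).mul_const _
    have hYindep : iIndepFun Y P :=
      hindep.comp (fun q x => (x - d / n) * c q)
        (fun q => (measurable_id.sub_const _).mul_const _)
    have hYbdd : ∀ q ω, 1 * Y q ω ≤ 2 := by
      intro q ω
      rw [one_mul, hY_def]
      have h1 : |A ω q.1.1 q.1.2 - d / n| ≤ 1 := by
        rcases hval ω q.1.1 q.1.2 with h | h <;> rw [h, abs_le] <;> constructor <;> nlinarith
      have h2 : |c q| ≤ 2 := by rcases hc q with h | h | h <;> rw [h] <;> norm_num
      calc (A ω q.1.1 q.1.2 - d / n) * c q ≤ |(A ω q.1.1 q.1.2 - d / n) * c q| := le_abs_self _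
        _ = |A ω q.1.1 q.1.2 - d / n| * |c q| := abs_mul _ _
        _ ≤ 1 * 2 := mul_le_mul h1 h2 (abs_nonneg _) zero_le_one
        _ = 2 := by norm_num
    have hYint : ∀ q, Integrable (fun ω => Real.exp (1 * Y q ω)) P := by
      intro q
      refine Integrable.mono' (integrable_const (Real.exp 2))
        ((((hYmeas q).const_mul 1).exp).aestronglyMeasurable) (ae_of_all _ fun ω => ?_)
      rw [Real.norm_of_nonneg (Real.exp_pos _).le]
      exact Real.exp_le_exp.mpr (hYbdd q ω)
    have hSfun : (fun ω => ∑ q : {q : Fin n × Fin n // q.1 < q.2}, Y q ω)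
        = ∑ q : {q : Fin n × Fin n // q.1 < q.2}, Y q := by
      funext ω; rw [Finset.sum_apply]
    have hSint : Integrable (fun ω =>
        Real.exp (1 * (∑ q : {q : Fin n × Fin n // q.1 < q.2}, Y q ω))) P := by
      have h := hYindep.integrable_exp_mul_sum (t := 1) hYmeas
        (s := Finset.univ) (fun q _ => hYint q)
      simpa [← hSfun] using h
    have hmgf : mgf (fun ω => ∑ q : {q : Fin n × Fin n // q.1 < q.2}, Y q ω) P 1
        ≤ Real.exp (d * n * (Real.exp 2 - 3)) := by
      rw [hSfun, hYindep.mgf_sum hYmeas]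
      have hcard : (Fintype.card {q : Fin n × Fin n // q.1 < q.2} : ℝ) ≤ n * n := by
        have h := Fintype.card_subtype_le (fun q : Fin n × Fin n => q.1 < q.2)
        calc (Fintype.card {q : Fin n × Fin n // q.1 < q.2} : ℝ)
            ≤ (Fintype.card (Fin n × Fin n) : ℝ) := by exact_mod_cast h
          _ = n * n := by simp
      have h9 : 0 ≤ (d/n) * (Real.exp 2 - 3) := by
        apply mul_nonneg hp0
        nlinarith [exp_two_facts.1, Real.exp_pos (-2)]
      calc ∏ q : {q : Fin n × Fin n // q.1 < q.2}, mgf (Y q) P 1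
          ≤ ∏ _q : {q : Fin n × Fin n // q.1 < q.2},
              Real.exp ((d/n) * (Real.exp 2 - 3)) := by
            apply Finset.prod_le_prod (fun q _ => mgf_nonneg) (fun q _ => ?_)
            exact bern_mgf P _ (hmeas _ _) (fun ω => hval ω _ _) _ _ hp0 (hber _ _ q.2) (hc q)
        _ = Real.exp ((Fintype.card {q : Fin n × Fin n // q.1 < q.2}) *
              ((d/n) * (Real.exp 2 - 3))) := by
            rw [Finset.prod_const, Finset.card_univ, ← Real.exp_nat_mul]
        _ ≤ Real.exp (d * n * (Real.exp 2 - 3)) := by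
            apply Real.exp_le_exp.mpr
            rcases Nat.eq_zero_or_pos n with hn | hn
            · subst hn
              simp only [Nat.cast_zero, mul_zero, zero_mul]
              have hcz : Fintype.card {q : Fin 0 × Fin 0 // q.1 < q.2} = 0 :=
                Fintype.card_eq_zero_iff.mpr ⟨fun q => q.val.1.elim0⟩
              rw [hcz]; simp
            · have hne : (n:ℝ) ≠ 0 := Nat.cast_ne_zero.mpr hn.ne'
              calc (Fintype.card {q : Fin n × Fin n // q.1 < q.2} : ℝ) *
                    ((d/n) * (Real.exp 2 - 3))
                  ≤ (n*n) * ((d/n)*(Real.exp 2 - 3)) := mul_le_mul_of_nonneg_right hcard h9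
                _ = d * n * (Real.exp 2 - 3) := by field_simp
    have hch := measure_ge_le_exp_mul_mgf (μ := P)
      (X := fun ω => ∑ q : {q : Fin n × Fin n // q.1 < q.2}, Y q ω)
      (6 * (1 + d) * n) zero_le_one hSint
    have hfinal : (P {ω | 6 * (1 + d) * n ≤
        ∑ q : {q : Fin n × Fin n // q.1 < q.2}, Y q ω}).toReal ≤ Real.exp (-(6 * n)) := by
      calc (P {ω | 6 * (1 + d) * n ≤
            ∑ q : {q : Fin n × Fin n // q.1 < q.2}, Y q ω}).toReal
          ≤ Real.exp (-1 * (6 * (1 + d) * n)) *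
            mgf (fun ω => ∑ q : {q : Fin n × Fin n // q.1 < q.2}, Y q ω) P 1 := hch
        _ ≤ Real.exp (-1 * (6 * (1 + d) * n)) * Real.exp (d * n * (Real.exp 2 - 3)) :=
            mul_le_mul_of_nonneg_left hmgf (Real.exp_pos _).le
        _ = Real.exp (-1 * (6 * (1 + d) * n) + d * n * (Real.exp 2 - 3)) :=
            (Real.exp_add _ _).symm
        _ ≤ Real.exp (-(6 * n)) := by
            apply Real.exp_le_exp.mpr
            have hdn' : 0 ≤ d * n := mul_nonneg hd.le (Nat.cast_nonneg n)
            nlinarith [exp_two_facts.2]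
    rw [ENNReal.le_ofReal_iff_toReal_le (measure_ne_top P _) (Real.exp_pos _).le]
    exact hfinal
  -- union bound
  set sg : (Fin n → Bool) → Fin n → ℝ := fun σ i => if σ i then 1 else -1 with hsg_def
  have hsg : ∀ σ i, sg σ i = 1 ∨ sg σ i = -1 := by
    intro σ i; rw [hsg_def]; rcases Bool.dichotomy (σ i) with h | h <;> simp [h]
  set Bad : (Fin n → Bool) × (Fin n → Bool) → Set Ω := fun στ =>
    {ω | 6 * (1 + d) * n ≤ ∑ q : {q : Fin n × Fin n // q.1 < q.2},
      (A ω q.1.1 q.1.2 - d / n) *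
        (sg στ.1 q.1.1 * sg στ.2 q.1.2 + sg στ.1 q.1.2 * sg στ.2 q.1.1)} with hBad_def
  have hsub2 : (⋃ στ, Bad στ)ᶜ ⊆
      {ω | ∀ s t : Fin n → ℝ, (∀ i, s i = 1 ∨ s i = -1) → (∀ j, t j = 1 ∨ t j = -1) →
        ∑ i, ∑ j, (A ω i j - (if i = j then 0 else d / n)) * s i * t j ≤
          6 * (1 + d) * n} := by
    intro ω hω s t hs ht
    rw [Set.mem_compl_iff, Set.mem_iUnion, not_exists] at hω
    rw [cut_sum_rewrite (A ω) (hsym ω) (hdiag ω) (d/n) s t]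
    have hσ : sg (fun i => if s i = 1 then true else false) = s := by
      funext i; rcases hs i with h | h <;> rw [hsg_def] <;> norm_num [h]
    have hτ : sg (fun j => if t j = 1 then true else false) = t := by
      funext j; rcases ht j with h | h <;> rw [hsg_def] <;> norm_num [h]
    have h := hω (fun i => if s i = 1 then true else false, fun j => if t j = 1 then true else false)
    rw [hBad_def] at h
    simp only [Set.mem_setOf_eq, hσ, hτ, not_le] at h
    exact h.le
  have hN : P (⋃ στ, Bad στ) ≤
      ENNReal.ofReal (((2^n * 2^n : ℕ) : ℝ) * Real.exp (-(6 * n))) := by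
    calc P (⋃ στ, Bad στ) ≤ ∑' στ, P (Bad στ) := measure_iUnion_le _
      _ ≤ ∑' _στ : (Fin n → Bool) × (Fin n → Bool),
          ENNReal.ofReal (Real.exp (-(6 * n))) :=
          ENNReal.tsum_le_tsum (fun στ => key (sg στ.1) (sg στ.2) (hsg στ.1) (hsg στ.2))
      _ = (Fintype.card ((Fin n → Bool) × (Fin n → Bool))) *
          ENNReal.ofReal (Real.exp (-(6 * n))) := by
          rw [tsum_fintype]
          simp [Finset.sum_const, Finset.card_univ, nsmul_eq_mul]
      _ = ENNReal.ofReal (((2^n * 2^n : ℕ) : ℝ) * Real.exp (-(6 * n))) := by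
          rw [ENNReal.ofReal_mul (Nat.cast_nonneg _), ENNReal.ofReal_natCast]
          congr 2
          simp [Fintype.card_prod, Fintype.card_fun]
  refine le_trans ?_ (measure_mono hsub2)
  have h1 : 1 - P (⋃ στ, Bad στ) ≤ P ((⋃ στ, Bad στ)ᶜ) := by
    rw [tsub_le_iff_right]
    calc (1:ENNReal) = P Set.univ := measure_univ.symm
      _ = P ((⋃ στ, Bad στ)ᶜ ∪ (⋃ στ, Bad στ)) := by rw [Set.compl_union_self]
      _ ≤ _ := measure_union_le _ _
  refine le_trans ?_ h1
  calc ENNReal.ofReal (1 - (5:ℝ) ^ ((2:ℤ) - n))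
      ≤ ENNReal.ofReal (1 - ((2^n * 2^n : ℕ) : ℝ) * Real.exp (-(6 * n))) :=
        ENNReal.ofReal_le_ofReal (by linarith [num_bound n])
    _ = 1 - ENNReal.ofReal (((2^n * 2^n : ℕ) : ℝ) * Real.exp (-(6 * n))) := by
        rw [ENNReal.ofReal_sub _ (by positivity), ENNReal.ofReal_one]
    _ ≤ 1 - P (⋃ στ, Bad στ) := tsub_le_tsub_left hN 1
end
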